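/- arXiv:2409.11339 — 3 statements merged into one kernel-verified Lean document; each statement's English description precedes it below -/
import Mathlib

section
/- Let Z ~ N(0,1), r ≥ 0, σ > 0, Δt > 0, P₀ > 0, and F(P₀,P₁) := P₁(1/√P₁ - 1/√P₀)⁺ + (√P₁ - √P₀)⁺. Set P₁ := P₀·exp((r - σ²/2)Δt + σ√Δt·Z). Then e^{-rΔt}·E[F(P₀, P₁)] = √P₀ · [ e^{-(r + σ²/4)Δt/2} - 1 + Φ((r + σ²/2)√Δt/σ) - e^{-rΔt}·Φ((r - σ²/2)√Δt/σ) ], where Φ is the standard normal CDF. -/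
open Real MeasureTheory ProbabilityTheory

/-- standard normal CDF -/
noncomputable def Phi (x : ℝ) : ℝ := ∫ t in Set.Iic x, Real.exp (-t^2/2) / Real.sqrt (2*π)

/-- CPMM per-block fee functional, with x⁺ = max x 0. -/
noncomputable def F (P₀ P₁ : ℝ) : ℝ :=
  P₁ * max (1 / Real.sqrt P₁ - 1 / Real.sqrt P₀) 0 + max (Real.sqrt P₁ - Real.sqrt P₀) 0

/-! Writing `P₁ = P₀ exp X`, the fee is `√P₀ (e^{X/2} - e^{min X 0})`. The first term is a value
of the Gaussian moment generating function. For the second, split at `X = 0`: on `{X ≤ 0}` the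
exponential tilt `e^{a z} φ(z) = e^{a²/2} φ(z - a)` turns the integral into a shifted normal
probability, and on `{X > 0}` it is a normal tail probability. -/

open Set
open scoped NNReal

lemma Phi_eq_gaussianReal_real_Iic (x : ℝ) : Phi x = (gaussianReal 0 1).real (Iic x) := by
  rw [measureReal_def, gaussianReal_apply_eq_integral 0 one_ne_zero, ENNReal.toReal_ofReal
    (setIntegral_nonneg measurableSet_Iic fun _ _ ↦ gaussianPDFReal_nonneg ..)]
  refine setIntegral_congr_fun measurableSet_Iic fun t _ ↦ ?_
  simp [gaussianPDFReal, div_eq_inv_mul]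

lemma gaussianReal_real_Ioi (μ x : ℝ) : (gaussianReal μ 1).real (Ioi x) = Phi (μ - x) := by
  have hmap : (gaussianReal 0 1).map (μ - ·) = gaussianReal μ 1 := by
    rw [gaussianReal_map_const_sub, sub_zero]
  rw [← hmap, map_measureReal_apply (by fun_prop) measurableSet_Ioi, Phi_eq_gaussianReal_real_Iic]
  have hpre : (μ - ·) ⁻¹' Ioi x = Iio (μ - x) := by ext; simp [lt_sub_comm]
  have := nullSingletonClass_gaussianReal (μ := 0) one_ne_zero
  rw [hpre, measureReal_congr Iio_ae_eq_Iic]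

lemma gaussianReal_real_Iic (μ x : ℝ) : (gaussianReal μ 1).real (Iic x) = 1 - Phi (μ - x) := by
  rw [← gaussianReal_real_Ioi, ← compl_Iic, probReal_compl_eq_one_sub measurableSet_Iic,
    sub_sub_cancel]

lemma exp_mul_mul_gaussianPDFReal (μ : ℝ) {v : ℝ≥0} (hv : v ≠ 0) (a x : ℝ) :
    exp (a * x) * gaussianPDFReal μ v x
      = exp (μ * a + v * a ^ 2 / 2) * gaussianPDFReal (μ + v * a) v x := by
  have hv' : (v : ℝ) ≠ 0 := by exact_mod_cast hv
  simp only [gaussianPDFReal, mul_left_comm (exp _), ← exp_add]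
  congr 2
  field_simp
  ring

lemma setIntegral_exp_mul_gaussianReal (μ : ℝ) {v : ℝ≥0} (hv : v ≠ 0) (a : ℝ) {s : Set ℝ}
    (hs : MeasurableSet s) :
    ∫ x in s, exp (a * x) ∂gaussianReal μ v
      = exp (μ * a + v * a ^ 2 / 2) * (gaussianReal (μ + v * a) v).real s := by
  rw [← integral_indicator hs, integral_gaussianReal_eq_integral_smul hv, measureReal_def,
    gaussianReal_apply_eq_integral _ hv,
    ENNReal.toReal_ofReal (setIntegral_nonneg hs fun _ _ ↦ gaussianPDFReal_nonneg ..),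
    ← integral_const_mul, ← integral_indicator hs]
  congr 1 with x
  by_cases hx : x ∈ s
  · simp [hx, mul_comm (gaussianPDFReal _ _ _), exp_mul_mul_gaussianPDFReal μ hv]
  · simp [hx]

lemma F_eq_sqrt_sub_min {P₀ P₁ : ℝ} (hP₀ : 0 < P₀) (hP₁ : 0 < P₁) :
    F P₀ P₁ = √P₁ - min (P₁ / √P₀) √P₀ := by
  obtain ⟨a, ha, rfl⟩ : ∃ a, 0 < a ∧ P₀ = a ^ 2 := ⟨√P₀, by positivity, (sq_sqrt hP₀.le).symm⟩
  obtain ⟨b, hb, rfl⟩ : ∃ b, 0 < b ∧ P₁ = b ^ 2 := ⟨√P₁, by positivity, (sq_sqrt hP₁.le).symm⟩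
  rw [F, sqrt_sq ha.le, sqrt_sq hb.le]
  rcases le_total b a with hba | hab
  · have h1 : 0 ≤ 1 / b - 1 / a := sub_nonneg.2 (one_div_le_one_div_of_le hb hba)
    have h2 : b ^ 2 / a ≤ a := by rw [div_le_iff₀ ha]; nlinarith
    rw [max_eq_left h1, max_eq_right (by linarith), min_eq_left h2]
    field_simp
    ring
  · have h1 : 1 / b - 1 / a ≤ 0 := sub_nonpos.2 (one_div_le_one_div_of_le ha hab)
    have h2 : a ≤ b ^ 2 / a := by rw [le_div_iff₀ ha]; nlinarith
    rw [max_eq_right h1, max_eq_left (by linarith), min_eq_right h2]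
    ring

lemma F_mul_exp {P₀ : ℝ} (hP₀ : 0 < P₀) (x : ℝ) :
    F P₀ (P₀ * exp x) = √P₀ * (exp (x / 2) - exp (min x 0)) := by
  rw [F_eq_sqrt_sub_min hP₀ (by positivity), sqrt_mul hP₀.le, ← exp_half,
    exp_monotone.map_min, exp_zero, mul_sub, mul_min_of_nonneg _ _ (sqrt_nonneg _), mul_one,
    mul_div_right_comm, div_sqrt]

lemma integrable_exp_min_zero {α : Type*} [MeasurableSpace α] {ν : Measure α} [IsFiniteMeasure ν]
    {f : α → ℝ} (hf : Measurable f) : Integrable (fun x ↦ exp (min (f x) 0)) ν :=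
  .of_bound (by fun_prop) 1 (ae_of_all _ fun x ↦ by
    rw [norm_of_nonneg (exp_nonneg _)]
    exact exp_le_one_iff.2 (min_le_right _ _))

lemma integral_exp_min_gaussianReal (m : ℝ) {s : ℝ} (hs : 0 < s) :
    ∫ z, exp (min (m + s * z) 0) ∂gaussianReal 0 1
      = exp (m + s ^ 2 / 2) * (1 - Phi (s + m / s)) + Phi (m / s) := by
  have hneg {z : ℝ} : m + s * z ≤ 0 ↔ z ≤ -m / s := by
    rw [le_div_iff₀ hs]
    constructor <;> intro h <;> linarith
  have hIic : ∫ z in Iic (-m / s), exp (min (m + s * z) 0) ∂gaussianReal 0 1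
      = exp (m + s ^ 2 / 2) * (1 - Phi (s + m / s)) := by
    rw [setIntegral_congr_fun measurableSet_Iic (g := fun z ↦ exp m * exp (s * z))
        fun z hz ↦ by rw [min_eq_left (hneg.2 hz), exp_add],
      integral_const_mul, setIntegral_exp_mul_gaussianReal 0 one_ne_zero s measurableSet_Iic,
      gaussianReal_real_Iic]
    simp only [NNReal.coe_one, zero_mul, zero_add, one_mul, sub_neg_eq_add, neg_div, exp_add]
    ring
  have hIoi : ∫ z in Ioi (-m / s), exp (min (m + s * z) 0) ∂gaussianReal 0 1 = Phi (m / s) := by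
    rw [setIntegral_congr_fun measurableSet_Ioi (g := fun _ ↦ 1)
        fun z hz ↦ by rw [min_eq_right (not_le.1 (mt hneg.1 (not_le.2 hz))).le, exp_zero],
      setIntegral_const, smul_eq_mul, mul_one, gaussianReal_real_Ioi, zero_sub, neg_div, neg_neg]
  rw [← integral_add_compl measurableSet_Iic (integrable_exp_min_zero (by fun_prop)), compl_Iic,
    hIic, hIoi]

lemma integral_F_mul_exp_of_map_eq_gaussianReal {Ω : Type*} [MeasurableSpace Ω] {μ : Measure Ω}
    {Z : Ω → ℝ} (hZ : μ.map Z = gaussianReal 0 1) {P₀ : ℝ} (hP₀ : 0 < P₀) (m : ℝ) {s : ℝ}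
    (hs : 0 < s) :
    ∫ ω, F P₀ (P₀ * exp (m + s * Z ω)) ∂μ
      = √P₀ * (exp (m / 2 + s ^ 2 / 8) - exp (m + s ^ 2 / 2) * (1 - Phi (s + m / s))
          - Phi (m / s)) := by
  have hZm : AEMeasurable Z μ := aemeasurable_of_map_neZero (by rw [hZ]; infer_instance)
  have hhalf : (fun z ↦ exp ((m + s * z) / 2)) = fun z ↦ exp (m / 2) * exp (s / 2 * z) := by
    ext z; rw [← exp_add]; ring_nf
  have hmgf : ∫ z, exp ((m + s * z) / 2) ∂gaussianReal 0 1 = exp (m / 2 + s ^ 2 / 8) := by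
    have h := congrFun (mgf_fun_id_gaussianReal (μ := 0) (v := 1)) (s / 2)
    rw [mgf] at h
    rw [hhalf, integral_const_mul, h, ← exp_add, NNReal.coe_one]
    ring_nf
  simp_rw [F_mul_exp hP₀]
  rw [← integral_map (f := fun z ↦ √P₀ * (exp ((m + s * z) / 2) - exp (min (m + s * z) 0))) hZm
      (by fun_prop), hZ, integral_const_mul,
    integral_sub (hhalf ▸ (integrable_exp_mul_gaussianReal _).const_mul _)
      (integrable_exp_min_zero (by fun_prop)), hmgf,
    integral_exp_min_gaussianReal m hs]
  ring

theorem stmt3_general {Ω : Type*} [MeasurableSpace Ω] (μ : Measure Ω)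
    (Z : Ω → ℝ) (hZ : Measure.map Z μ = gaussianReal 0 1)
    (r σ Δt P₀ : ℝ) (hσ : 0 < σ) (hΔt : 0 < Δt) (hP : 0 < P₀) :
    Real.exp (-(r*Δt)) *
        ∫ ω, F P₀ (P₀ * Real.exp ((r - σ^2/2)*Δt + σ * Real.sqrt Δt * Z ω)) ∂μ
      = Real.sqrt P₀ *
        (Real.exp (-(r + σ^2/4)*Δt/2) - 1
          + Phi ((r + σ^2/2) * Real.sqrt Δt / σ)
          - Real.exp (-(r*Δt)) * Phi ((r - σ^2/2) * Real.sqrt Δt / σ)) := by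
  obtain ⟨u, hu, rfl⟩ : ∃ u, 0 < u ∧ Δt = u ^ 2 := ⟨√Δt, sqrt_pos.2 hΔt, (sq_sqrt hΔt.le).symm⟩
  rw [sqrt_sq hu.le, integral_F_mul_exp_of_map_eq_gaussianReal hZ hP _ (by positivity)]
  have hd₁ : σ * u + (r - σ ^ 2 / 2) * u ^ 2 / (σ * u) = (r + σ ^ 2 / 2) * u / σ := by
    field_simp; ring
  have hd₂ : (r - σ ^ 2 / 2) * u ^ 2 / (σ * u) = (r - σ ^ 2 / 2) * u / σ := by
    field_simp
  have hdisc₁ : exp (-(r * u ^ 2)) * exp ((r - σ ^ 2 / 2) * u ^ 2 / 2 + (σ * u) ^ 2 / 8)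
      = exp (-(r + σ ^ 2 / 4) * u ^ 2 / 2) := by
    rw [← exp_add]; ring_nf
  have hdisc₂ : exp (-(r * u ^ 2)) * exp ((r - σ ^ 2 / 2) * u ^ 2 + (σ * u) ^ 2 / 2) = 1 := by
    rw [← exp_add, ← exp_zero]; ring_nf
  rw [hd₁, hd₂]
  linear_combination √P₀ * hdisc₁ - √P₀ * (1 - Phi ((r + σ ^ 2 / 2) * u / σ)) * hdisc₂

theorem stmt3 {Ω : Type*} [MeasurableSpace Ω] (μ : Measure Ω) [IsProbabilityMeasure μ]
    (Z : Ω → ℝ) (hZ : Measure.map Z μ = gaussianReal 0 1)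
    (r σ Δt P₀ : ℝ) (hr : 0 ≤ r) (hσ : 0 < σ) (hΔt : 0 < Δt) (hP : 0 < P₀) :
    Real.exp (-(r*Δt)) *
        ∫ ω, F P₀ (P₀ * Real.exp ((r - σ^2/2)*Δt + σ * Real.sqrt Δt * Z ω)) ∂μ
      = Real.sqrt P₀ *
        (Real.exp (-(r + σ^2/4)*Δt/2) - 1
          + Phi ((r + σ^2/2) * Real.sqrt Δt / σ)
          - Real.exp (-(r*Δt)) * Phi ((r - σ^2/2) * Real.sqrt Δt / σ)) :=
  stmt3_general μ Z hZ r σ Δt P₀ hσ hΔt hP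
end

section
/- For r ≥ 0, Δt > 0, γ̂ > 0, define G(σ) := (2+γ̂)[1 - e^{-(r+σ²/4)Δt/2}] - γ̂[Φ((r+σ²/2)√Δt/σ) - e^{-rΔt}Φ((r-σ²/2)√Δt/σ)] for σ > 0. Then G is differentiable on (0,∞) with G'(σ) = e^{-(r+σ²/4)Δt/2}·[(2+γ̂)·σΔt/4 - γ̂·√(Δt/(2π))·e^{-r²Δt/(2σ²)}]. -/
open Real

/-!
Write `d₁, d₂ = (r ± σ²/2)√Δt/σ`. The Black–Scholes identity `φ(d₁) = e^{-rΔt} φ(d₂)`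
(from `d₁² - d₂² = 2rΔt`) collapses the derivative of `Φ(d₁) - e^{-rΔt} Φ(d₂)` to
`φ(d₁) (d₁ - d₂)' = φ(d₁) √Δt`, and completing the square gives
`φ(d₁) = e^{-(r+σ²/4)Δt/2} e^{-r²Δt/(2σ²)} / √(2π)`.
-/

theorem hasDerivAt_integral_Iic {E : Type*} [NormedAddCommGroup E] [NormedSpace ℝ E]
    [CompleteSpace E] {f : ℝ → E} (hf : MeasureTheory.Integrable f) (hc : Continuous f)
    (x : ℝ) : HasDerivAt (fun y => ∫ t in Set.Iic y, f t) (f x) x := by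
  have hsplit : ∀ y, ∫ t in Set.Iic y, f t = (∫ t in Set.Iic 0, f t) + ∫ t in (0 : ℝ)..y, f t :=
    fun y => by
      rw [← intervalIntegral.integral_Iic_sub_Iic hf.integrableOn hf.integrableOn,
        add_sub_cancel]
  exact ((intervalIntegral.integral_hasDerivAt_right hf.intervalIntegrable
    hc.aestronglyMeasurable.stronglyMeasurableAtFilter hc.continuousAt).const_add _
    ).congr_of_eventuallyEq (.of_forall hsplit)

theorem hasDerivAt_Phi (x : ℝ) :
    HasDerivAt Phi (Real.exp (-x^2/2) / Real.sqrt (2*π)) x := by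
  have hint : MeasureTheory.Integrable (fun t : ℝ => Real.exp (-t^2/2) / Real.sqrt (2*π)) := by
    simpa only [neg_div, neg_mul, one_div, inv_mul_eq_div] using
      (integrable_exp_neg_mul_sq (b := 1/2) (by norm_num)).div_const (Real.sqrt (2*π))
  exact hasDerivAt_integral_Iic hint (by fun_prop) x

section BlackScholes

variable {r T σ : ℝ}

theorem exp_neg_sq_half_d₁ (hT : 0 ≤ T) (hσ : σ ≠ 0) :
    Real.exp (-((r + σ^2/2) * Real.sqrt T / σ)^2/2)
      = Real.exp (-(r + σ^2/4)*T/2) * Real.exp (-r^2*T/(2*σ^2)) := by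
  rw [← Real.exp_add, div_pow, mul_pow, Real.sq_sqrt hT]
  congr 1
  field_simp
  ring

theorem exp_neg_mul_exp_neg_sq_half_d₂ (hT : 0 ≤ T) (hσ : σ ≠ 0) :
    Real.exp (-(r*T)) * Real.exp (-((r - σ^2/2) * Real.sqrt T / σ)^2/2)
      = Real.exp (-(r + σ^2/4)*T/2) * Real.exp (-r^2*T/(2*σ^2)) := by
  rw [← Real.exp_add, ← Real.exp_add, div_pow, mul_pow, Real.sq_sqrt hT]
  congr 1
  field_simp
  ring

theorem hasDerivAt_add_mul_sq_mul_sqrt_div (c : ℝ) (hσ : σ ≠ 0) :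
    HasDerivAt (fun s : ℝ => (r + c * s^2) * Real.sqrt T / s)
      (c * Real.sqrt T - r * Real.sqrt T / σ^2) σ := by
  have h := ((((hasDerivAt_pow 2 σ).const_mul c).const_add r).mul_const (Real.sqrt T)).div
    (hasDerivAt_id σ) hσ
  refine h.congr_deriv ?_
  simp only [id]
  field_simp
  ring

theorem hasDerivAt_Phi_d₁_sub_Phi_d₂ (hT : 0 ≤ T) (hσ : σ ≠ 0) :
    HasDerivAt (fun s : ℝ => Phi ((r + s^2/2) * Real.sqrt T / s)
        - Real.exp (-(r*T)) * Phi ((r - s^2/2) * Real.sqrt T / s))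
      (Real.exp (-(r + σ^2/4)*T/2) * Real.exp (-r^2*T/(2*σ^2))
        * (Real.sqrt T / Real.sqrt (2*π))) σ := by
  have hd₁ : HasDerivAt (fun s : ℝ => (r + s^2/2) * Real.sqrt T / s)
      (1/2 * Real.sqrt T - r * Real.sqrt T / σ^2) σ :=
    (hasDerivAt_add_mul_sq_mul_sqrt_div (1/2) hσ).congr_of_eventuallyEq
      (.of_forall fun s => by ring)
  have hd₂ : HasDerivAt (fun s : ℝ => (r - s^2/2) * Real.sqrt T / s)
      (-1/2 * Real.sqrt T - r * Real.sqrt T / σ^2) σ :=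
    (hasDerivAt_add_mul_sq_mul_sqrt_div (-1/2) hσ).congr_of_eventuallyEq
      (.of_forall fun s => by ring)
  refine (((hasDerivAt_Phi _).comp σ hd₁).sub
    (((hasDerivAt_Phi _).comp σ hd₂).const_mul (Real.exp (-(r*T))))).congr_deriv ?_
  linear_combination
    (Real.sqrt T / 2 - r * Real.sqrt T / σ^2) / Real.sqrt (2*π) * exp_neg_sq_half_d₁ (r := r) hT hσ
    - (-Real.sqrt T / 2 - r * Real.sqrt T / σ^2) / Real.sqrt (2*π)
      * exp_neg_mul_exp_neg_sq_half_d₂ (r := r) hT hσ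

end BlackScholes

theorem stmt9_general (r Δt γ : ℝ) (hΔt : 0 < Δt) :
    ∀ σ : ℝ, 0 < σ →
      HasDerivAt (fun s : ℝ =>
          (2+γ) * (1 - Real.exp (-(r + s^2/4)*Δt/2))
            - γ * (Phi ((r + s^2/2) * Real.sqrt Δt / s)
                - Real.exp (-(r*Δt)) * Phi ((r - s^2/2) * Real.sqrt Δt / s)))
        (Real.exp (-(r + σ^2/4)*Δt/2) *
          ((2+γ) * σ * Δt / 4
            - γ * Real.sqrt (Δt/(2*π)) * Real.exp (-r^2*Δt/(2*σ^2)))) σ := by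
  intro σ hσ
  have hexp : HasDerivAt (fun s : ℝ => Real.exp (-(r + s^2/4)*Δt/2))
      (Real.exp (-(r + σ^2/4)*Δt/2) * (-(σ * Δt / 4))) σ :=
    (((((hasDerivAt_pow 2 σ).div_const 4).const_add r).neg.mul_const Δt).div_const 2).exp
      |>.congr_deriv (by simp only [Pi.neg_apply]; ring)
  refine ((hexp.const_sub 1).const_mul (2+γ) |>.sub
    ((hasDerivAt_Phi_d₁_sub_Phi_d₂ hΔt.le hσ.ne').const_mul γ)).congr_deriv ?_
  rw [Real.sqrt_div hΔt.le]
  ring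

theorem stmt9 (r Δt γ : ℝ) (hr : 0 ≤ r) (hΔt : 0 < Δt) (hγ : 0 < γ) :
    ∀ σ : ℝ, 0 < σ →
      HasDerivAt (fun s : ℝ =>
          (2+γ) * (1 - Real.exp (-(r + s^2/4)*Δt/2))
            - γ * (Phi ((r + s^2/2) * Real.sqrt Δt / s)
                - Real.exp (-(r*Δt)) * Phi ((r - s^2/2) * Real.sqrt Δt / s)))
        (Real.exp (-(r + σ^2/4)*Δt/2) *
          ((2+γ) * σ * Δt / 4
            - γ * Real.sqrt (Δt/(2*π)) * Real.exp (-r^2*Δt/(2*σ^2)))) σ :=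
  stmt9_general r Δt γ hΔt
end

section
/- For r > 0, Δt > 0, γ̂ > 0, the derivative G'(σ) = e^{-(r+σ²/4)Δt/2}·[(2+γ̂)σΔt/4 - γ̂√(Δt/(2π))·e^{-r²Δt/(2σ²)}] has a root σ̄ > 0 satisfying (2+γ̂)σ̄Δt/4 = γ̂√(Δt/(2π))·e^{-r²Δt/(2σ̄²)} if and only if Δt ≤ Δ̄t := √(8/π)·(γ̂/((2+γ̂)r))·e^{-1/2}. Equivalently, the equation u·e^{r²Δt/(2u²)} = (4γ̂/((2+γ̂)Δt))·√(Δt/(2π)) has a solution u > 0 iff Δt ≤ Δ̄t, since the function u ↦ u·e^{r²Δt/(2u²)} on (0,∞) attains its minimum value r√(Δt·e) at u = r√Δt. -/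
/-!
With `c = r²Δt`, the function `u ↦ u·exp(c/(2u²))` is bounded below by `√(c·e)` on `(0, ∞)`,
because `e·t ≤ exp t` for `t = c/u²`, with equality at `u = √c`. It tends to `∞` with `u`, so by
the intermediate value theorem it takes exactly the values `≥ √(c·e)`. The root equation of `G'`
is this equation after dividing by `(2+γ̂)Δt/4` and multiplying by `exp(c/(2σ²))`, and comparing
`√(c·e)` with the right-hand side is, after squaring, the threshold `Δt ≤ Δ̄t`.
-/

open Real

section MulExpInvSq

variable {c u : ℝ}

theorem sqrt_mul_exp_one_le_mul_exp (hu : 0 < u) :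
    √(c * exp 1) ≤ u * exp (c / (2 * u ^ 2)) := by
  rw [sqrt_le_left (by positivity)]
  have hsq : (u * exp (c / (2 * u ^ 2))) ^ 2 = u ^ 2 * exp (c / u ^ 2) := by
    rw [mul_pow, sq (exp _), ← exp_add]
    congr 2
    field_simp
    ring
  calc c * exp 1 = u ^ 2 * (exp 1 * (c / u ^ 2)) := by field_simp
    _ ≤ u ^ 2 * exp (c / u ^ 2) := by gcongr; exact exp_one_mul_le_exp
    _ = _ := hsq.symm

theorem sqrt_mul_exp_at_sqrt (hc : 0 < c) :
    √c * exp (c / (2 * √c ^ 2)) = √(c * exp 1) := by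
  rw [sq_sqrt hc.le, sqrt_mul hc.le, ← exp_half]
  congr 2
  field_simp

theorem exists_mul_exp_eq_of_le (hc : 0 < c) {C : ℝ} (hC : √(c * exp 1) ≤ C) :
    ∃ u, 0 < u ∧ u * exp (c / (2 * u ^ 2)) = C := by
  have hsc : 0 < √c := sqrt_pos.mpr hc
  have hcont :
      ContinuousOn (fun u => u * exp (c / (2 * u ^ 2))) (Set.Icc √c (√c + C)) := by
    refine continuousOn_id.mul (continuous_exp.comp_continuousOn
      (continuousOn_const.div (by fun_prop) fun x hx => ?_))
    have : 0 < x := hsc.trans_le hx.1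
    positivity
  have hC0 : 0 ≤ C := (sqrt_nonneg _).trans hC
  have hupper : C ≤ (√c + C) * exp (c / (2 * (√c + C) ^ 2)) :=
    calc C ≤ (√c + C) * 1 := by linarith
      _ ≤ _ := by gcongr; exact one_le_exp (by positivity)
  obtain ⟨u, hu, hfu⟩ := intermediate_value_Icc (by linarith) hcont
    ⟨(sqrt_mul_exp_at_sqrt hc).symm ▸ hC, hupper⟩
  exact ⟨u, hsc.trans_le hu.1, hfu⟩

theorem exists_mul_exp_eq_iff (hc : 0 < c) {C : ℝ} :
    (∃ u, 0 < u ∧ u * exp (c / (2 * u ^ 2)) = C) ↔ √(c * exp 1) ≤ C :=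
  ⟨fun ⟨_, hu, hfu⟩ => hfu ▸ sqrt_mul_exp_one_le_mul_exp hu, exists_mul_exp_eq_of_le hc⟩

end MulExpInvSq

theorem root_eq_iff_mul_exp_eq {c Δt γ S σ : ℝ} (hΔt : Δt ≠ 0) (hγ : 2 + γ ≠ 0) :
    (2 + γ) * σ * Δt / 4 = γ * S * exp (-c / (2 * σ ^ 2)) ↔
      σ * exp (c / (2 * σ ^ 2)) = 4 * γ / ((2 + γ) * Δt) * S := by
  rw [neg_div, exp_neg]
  constructor <;> intro h <;> field_simp at h ⊢ <;> linear_combination h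

theorem sqrt_mul_exp_one_le_iff {r Δt γ : ℝ} (hr : 0 < r) (hΔt : 0 < Δt) (hγ : 0 < γ) :
    √(r ^ 2 * Δt * exp 1) ≤ 4 * γ / ((2 + γ) * Δt) * √(Δt / (2 * π)) ↔
      Δt ≤ √(8 / π) * (γ / ((2 + γ) * r)) * exp (-(1:ℝ) / 2) := by
  set K := 8 * γ ^ 2 / ((2 + γ) ^ 2 * π) with hK
  have hleft : (4 * γ / ((2 + γ) * Δt) * √(Δt / (2 * π))) ^ 2 = K / Δt := by
    rw [mul_pow, sq_sqrt (by positivity), hK]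
    field_simp
    ring
  have hright :
      (√(8 / π) * (γ / ((2 + γ) * r)) * exp (-(1:ℝ) / 2)) ^ 2 = K / (r ^ 2 * exp 1) := by
    rw [mul_pow, mul_pow, sq_sqrt (by positivity), ← exp_nat_mul, hK,
      exp_eq_exp.mpr (by norm_num : ((2:ℕ):ℝ) * (-(1:ℝ) / 2) = -1), exp_neg]
    field_simp
  rw [sqrt_le_left (by positivity), ← sq_le_sq₀ hΔt.le (by positivity), hleft, hright]
  clear_value K
  rw [le_div_iff₀ hΔt, le_div_iff₀ (by positivity)]
  constructor <;> intro h <;> linarith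

theorem stmt13 (r Δt γ : ℝ) (hr : 0 < r) (hΔt : 0 < Δt) (hγ : 0 < γ) :
    ((∃ σb : ℝ, 0 < σb ∧
        (2+γ) * σb * Δt / 4
          = γ * Real.sqrt (Δt/(2*π)) * Real.exp (-r^2*Δt/(2*σb^2)))
      ↔ Δt ≤ Real.sqrt (8/π) * (γ / ((2+γ)*r)) * Real.exp (-(1:ℝ)/2)) ∧
    ((∃ u : ℝ, 0 < u ∧
        u * Real.exp (r^2*Δt/(2*u^2)) = (4*γ/((2+γ)*Δt)) * Real.sqrt (Δt/(2*π)))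
      ↔ Δt ≤ Real.sqrt (8/π) * (γ / ((2+γ)*r)) * Real.exp (-(1:ℝ)/2)) ∧
    (∀ u : ℝ, 0 < u →
      r * Real.sqrt (Δt * Real.exp 1) ≤ u * Real.exp (r^2*Δt/(2*u^2))) ∧
    (r * Real.sqrt Δt) * Real.exp (r^2*Δt/(2*(r * Real.sqrt Δt)^2))
      = r * Real.sqrt (Δt * Real.exp 1) := by
  have hc : 0 < r ^ 2 * Δt := by positivity
  have hsqrt : √(r ^ 2 * Δt) = r * √Δt := by rw [sqrt_mul (sq_nonneg r), sqrt_sq hr.le]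
  have hmin : √(r ^ 2 * Δt * exp 1) = r * √(Δt * exp 1) := by
    rw [mul_assoc, sqrt_mul (sq_nonneg r), sqrt_sq hr.le]
  have hsol := (exists_mul_exp_eq_iff hc).trans (sqrt_mul_exp_one_le_iff hr hΔt hγ)
  refine ⟨?_, hsol, fun u hu => hmin ▸ sqrt_mul_exp_one_le_mul_exp hu, ?_⟩
  · simp only [neg_mul, root_eq_iff_mul_exp_eq hΔt.ne' (by positivity : 2 + γ ≠ 0), hsol]
  · rw [← hsqrt, ← hmin]
    exact sqrt_mul_exp_at_sqrt hc
end
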